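/- Let M be a matroid with weight functions w₁, w₂, and let Q = [a, b] ⊆ [0,1] be an interval such that for every λ in the open interval (a,b) and every pair i, j ∈ E with (w₁(i),w₂(i)) ≠ (w₁(j),w₂(j)), the scalarized weights w^{(λ)}(i) and w^{(λ)}(j) are never equal. Then any base minimizing w^{(c)} for some c ∈ (a,b) also minimizes w^{(λ)} for every λ ∈ [a,b]. -/

import Mathlib

/-!
A base minimizing a weight `w` is characterised by the exchange condition `w f ≤ w e` whenever
`x - f + e` is a base (sufficiency by symmetric base exchange and induction on `|x \ y|`), so it
stays optimal for every weight that preserves the weak order of `w` on elements. For two elements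
`u, v` with distinct weight vectors, `λ ↦ w^{(λ)}(v) - w^{(λ)}(u)` is continuous and has no zero in
`(a,b)`, so by the intermediate value theorem its sign at `c` persists on `(a,b)`, and by
continuity on `[a,b]`.
-/

open Set

theorem finsum_mem_insert_sdiff_singleton_add {α β : Type*} [AddCommMonoid β] (w : α → β)
    {s : Set α} {e f : α} (hs : s.Finite) (he : e ∈ s) (hf : f ∉ s) :
    (∑ᶠ i ∈ insert f (s \ {e}), w i) + w e = (∑ᶠ i ∈ s, w i) + w f := by
  have hsplit : (∑ᶠ i ∈ s, w i) = w e + ∑ᶠ i ∈ s \ {e}, w i := by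
    conv_lhs => rw [← insert_eq_of_mem he, ← insert_sdiff_singleton]
    exact finsum_mem_insert w (fun h ↦ h.2 rfl) hs.sdiff
  rw [finsum_mem_insert w (fun h ↦ hf h.1) hs.sdiff, hsplit]
  abel

namespace Matroid

variable {α β : Type*} {M : Matroid α} {x y : Set α} {e f : α}

theorem IsBase.exists_symm_exchange (hx : M.IsBase x) (hy : M.IsBase y) (hfx : f ∈ x)
    (hfy : f ∉ y) :
    ∃ e ∈ y, e ∉ x ∧ M.IsBase (insert e (x \ {f})) ∧ M.IsBase (insert f (y \ {e})) := by
  have hC := hy.fundCircuit_isCircuit (hx.subset_ground hfx) hfy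
  have hK := fundCocircuit_isCocircuit hfx hx
  -- A circuit and a cocircuit never meet in exactly one element.
  obtain ⟨e, ⟨heC, heK⟩, hef⟩ :=
    (hC.isCocircuit_inter_nontrivial hK ⟨f, mem_fundCircuit .., mem_fundCocircuit ..⟩).exists_ne f
  have hey : e ∈ y := by
    simpa [hef] using M.fundCircuit_subset_insert f y heC
  have hex : e ∉ x := fun hex ↦ by
    simpa [hef, hex] using M.fundCocircuit_subset_insert_compl f x heK
  refine ⟨e, hey, hex, hx.exchange_isBase_of_indep hex ?_, hy.exchange_isBase_of_indep hfy ?_⟩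
  · rw [hx.mem_fundCocircuit_iff_mem_fundCircuit,
      hx.indep.mem_fundCircuit_iff (by rw [hx.closure_eq]; exact hy.subset_ground hey) hex] at heK
    rwa [insert_sdiff_singleton_comm (Ne.symm (ne_of_mem_of_not_mem hfx hex))]
  · rw [hy.indep.mem_fundCircuit_iff (by rw [hy.closure_eq]; exact hx.subset_ground hfx) hfy] at heC
    rwa [insert_sdiff_singleton_comm (Ne.symm hef)]

section MinWeightBase

variable [AddCommMonoid β] [PartialOrder β] [IsOrderedCancelAddMonoid β]

def IsMinWeightBase (M : Matroid α) (w : α → β) (x : Set α) : Prop :=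
  M.IsBase x ∧ ∀ y, M.IsBase y → (∑ᶠ i ∈ x, w i) ≤ ∑ᶠ i ∈ y, w i

theorem IsMinWeightBase.le_of_exchange [M.RankFinite] {w : α → β} (hx : M.IsMinWeightBase w x)
    (hfx : f ∈ x) (hex : e ∉ x) (hB : M.IsBase (insert e (x \ {f}))) : w f ≤ w e := by
  have hsum := finsum_mem_insert_sdiff_singleton_add w hx.1.finite hfx hex
  have hle := add_le_add_left (hx.2 _ hB) (w f)
  rw [hsum] at hle
  exact le_of_add_le_add_left hle

theorem IsBase.isMinWeightBase_of_forall_exchange [M.RankFinite] {w : α → β} (hx : M.IsBase x)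
    (hloc : ∀ f ∈ x, ∀ e ∉ x, M.IsBase (insert e (x \ {f})) → w f ≤ w e) :
    M.IsMinWeightBase w x := by
  refine ⟨hx, fun y hy ↦ ?_⟩
  induction hn : (x \ y).ncard using Nat.strong_induction_on generalizing y with
  | _ n ih =>
    by_cases hxy : x ⊆ y
    · rw [hx.eq_of_subset_isBase hy hxy]
    obtain ⟨f, hfx, hfy⟩ := not_subset.mp hxy
    obtain ⟨e, hey, hex, hB, hy'⟩ := hx.exists_symm_exchange hy hfx hfy
    have hcard : (x \ insert f (y \ {e})).ncard < n := by
      have hdiff : x \ insert f (y \ {e}) = (x \ y) \ {f} := by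
        ext i
        have hne : i ∈ x → i ≠ e := fun hi h ↦ hex (h ▸ hi)
        simp only [mem_sdiff, mem_insert_iff, mem_singleton_iff]
        tauto
      rw [hdiff, ← hn]
      exact ncard_sdiff_singleton_lt_of_mem ⟨hfx, hfy⟩ hx.finite.sdiff
    have hle := add_le_add (ih _ hcard _ hy' rfl) (hloc f hfx e hex hB)
    rw [finsum_mem_insert_sdiff_singleton_add w hy.finite hey hfy] at hle
    exact le_of_add_le_add_right hle

theorem IsMinWeightBase.of_weight_le_imp_le {γ : Type*} [AddCommMonoid γ] [PartialOrder γ]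
    [IsOrderedCancelAddMonoid γ] [M.RankFinite] {w : α → β} {w' : α → γ}
    (hx : M.IsMinWeightBase w x) (hw : ∀ u v, w u ≤ w v → w' u ≤ w' v) :
    M.IsMinWeightBase w' x :=
  hx.1.isMinWeightBase_of_forall_exchange fun f hf e he hB ↦ hw f e (hx.le_of_exchange hf he hB)

end MinWeightBase

end Matroid

theorem nonneg_of_ne_zero_on_Ioo {g : ℝ → ℝ} (hg : Continuous g) {a b c t : ℝ}
    (hc : c ∈ Ioo a b) (hgc : 0 ≤ g c) (hg0 : ∀ s ∈ Ioo a b, g s ≠ 0) (ht : t ∈ Icc a b) :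
    0 ≤ g t := by
  have hpos : ∀ s ∈ Ioo a b, 0 ≤ g s := by
    intro s hs
    by_contra! hneg
    obtain ⟨r, hr, hr0⟩ := isPreconnected_Ioo.intermediate_value hs hc hg.continuousOn
      ⟨hneg.le, hgc⟩
    exact hg0 r hr hr0
  rw [← closure_Ioo (hc.1.trans hc.2).ne] at ht
  exact (isClosed_le continuous_const hg).closure_subset_iff.2 hpos ht

def scalarizedWeight {α : Type*} (w₁ w₂ : α → ℝ) (t : ℝ) (e : α) : ℝ :=
  (1 - t) * w₁ e + t * w₂ e

theorem scalarizedWeight_le_of_le {α : Type*} {w₁ w₂ : α → ℝ} {a b c lam : ℝ}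
    (hsep : ∀ t ∈ Ioo a b, ∀ i j, (w₁ i, w₂ i) ≠ (w₁ j, w₂ j) →
      scalarizedWeight w₁ w₂ t i ≠ scalarizedWeight w₁ w₂ t j)
    (hc : c ∈ Ioo a b) (hlam : lam ∈ Icc a b) {u v : α}
    (h : scalarizedWeight w₁ w₂ c u ≤ scalarizedWeight w₁ w₂ c v) :
    scalarizedWeight w₁ w₂ lam u ≤ scalarizedWeight w₁ w₂ lam v := by
  by_cases hvec : (w₁ u, w₂ u) = (w₁ v, w₂ v)
  · obtain ⟨h₁, h₂⟩ := Prod.mk.inj hvec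
    simp only [scalarizedWeight, h₁, h₂, le_refl]
  have hcont : Continuous fun t ↦ scalarizedWeight w₁ w₂ t v - scalarizedWeight w₁ w₂ t u := by
    unfold scalarizedWeight
    fun_prop
  exact sub_nonneg.1 <| nonneg_of_ne_zero_on_Ioo hcont hc (sub_nonneg.2 h)
    (fun t ht ↦ sub_ne_zero.2 (hsep t ht u v hvec).symm) hlam

theorem interior_optimum_optimal_on_closure_general
    {α : Type*} [Fintype α] (M : Matroid α) (w₁ w₂ : α → ℝ)
    (a b : ℝ)
    (hsep : ∀ lam ∈ Set.Ioo a b, ∀ i j : α, (w₁ i, w₂ i) ≠ (w₁ j, w₂ j) →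
      (1 - lam) * w₁ i + lam * w₂ i ≠ (1 - lam) * w₁ j + lam * w₂ j)
    (c : ℝ) (hc : c ∈ Set.Ioo a b)
    (x : Set α) (hx : M.IsBase x)
    (hxmin : ∀ y : Set α, M.IsBase y →
      (∑ᶠ e ∈ x, ((1 - c) * w₁ e + c * w₂ e)) ≤ ∑ᶠ e ∈ y, ((1 - c) * w₁ e + c * w₂ e)) :
    ∀ lam ∈ Set.Icc a b, ∀ y : Set α, M.IsBase y →
      (∑ᶠ e ∈ x, ((1 - lam) * w₁ e + lam * w₂ e)) ≤
        ∑ᶠ e ∈ y, ((1 - lam) * w₁ e + lam * w₂ e) := by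
  intro lam hlam
  have hmin : M.IsMinWeightBase (scalarizedWeight w₁ w₂ c) x := ⟨hx, hxmin⟩
  exact (hmin.of_weight_le_imp_le fun u v ↦ scalarizedWeight_le_of_le hsep hc hlam).2

/-- if inside the open interval `(a,b)` no two elements with distinct weight
vectors ever have equal scalarized weight, then a base minimizing `w^{(c)}` for some
`c ∈ (a,b)` minimizes `w^{(λ)}` for every `λ ∈ [a,b]`. -/
theorem interior_optimum_optimal_on_closure
    {α : Type*} [Fintype α] (M : Matroid α) (w₁ w₂ : α → ℝ)
    (a b : ℝ) (hab : a < b) (ha : 0 ≤ a) (hb : b ≤ 1)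
    (hsep : ∀ lam ∈ Set.Ioo a b, ∀ i j : α, (w₁ i, w₂ i) ≠ (w₁ j, w₂ j) →
      (1 - lam) * w₁ i + lam * w₂ i ≠ (1 - lam) * w₁ j + lam * w₂ j)
    (c : ℝ) (hc : c ∈ Set.Ioo a b)
    (x : Set α) (hx : M.IsBase x)
    (hxmin : ∀ y : Set α, M.IsBase y →
      (∑ᶠ e ∈ x, ((1 - c) * w₁ e + c * w₂ e)) ≤ ∑ᶠ e ∈ y, ((1 - c) * w₁ e + c * w₂ e)) :
    ∀ lam ∈ Set.Icc a b, ∀ y : Set α, M.IsBase y →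
      (∑ᶠ e ∈ x, ((1 - lam) * w₁ e + lam * w₂ e)) ≤
        ∑ᶠ e ∈ y, ((1 - lam) * w₁ e + lam * w₂ e) :=
  interior_optimum_optimal_on_closure_general M w₁ w₂ a b hsep c hc x hx hxmin
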